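/- Let v ∈ ℚ[[q,t]] be the unique formal power series with zero constant term satisfying (1−t)·v = q·(1−v)·(t−v). For j = 1, 2 let V_j ∈ ℚ[[q]] be the one-variable power series whose coefficient of q^n equals the coefficient of q^n t^j in v. Then (1+q)·V₁ = q and (1+q)³·V₂ = q as identities in ℚ[[q]]. (Equivalently, after the substitution t = 1−y, one has v = (1−y)·q/(1+q) + (1−y)²·q/(1+q)³ + O((1−y)³).) -/

import Mathlib

/-!
Expanding a series in `q, t` in powers of `t` with coefficients in `ℚ⟦q⟧` is a ring isomorphism, so
the functional equation can be compared coefficientwise in `t`. Writing `Vⱼ` for the coefficient of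
`tʲ`, the coefficients of `t⁰, t¹, t²` give `V₀ (1 + q (1 - V₀)) = 0`, then `(1 + q) V₁ = q`, then
`(1 + q) V₂ = (1 - q) V₁ + q V₁²`. The factor `1 + q (1 - V₀)` is a unit, so `V₀ = 0`, and the
remaining two relations are solved by linear algebra over `ℚ⟦q⟧`.
-/

/-- The coefficient of `q^n t^k` in a two-variable formal power series over `ℚ`,
where `q` is the variable of index `0` and `t` is the variable of index `1`. -/
noncomputable def coeffQT (n k : ℕ) (u : MvPowerSeries (Fin 2) ℚ) : ℚ :=
  MvPowerSeries.coeff (Finsupp.single (0 : Fin 2) n + Finsupp.single (1 : Fin 2) k) u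

noncomputable def sliceT (j : ℕ) (v : MvPowerSeries (Fin 2) ℚ) : PowerSeries ℚ :=
  PowerSeries.mk fun n => coeffQT n j v

open PowerSeries

/-- The variable `t = X 1` becomes `none`, the variable of the outer power series ring. -/
def finTwoEquivOptionUnit : Fin 2 ≃ Option Unit where
  toFun := ![some (), none]
  invFun o := o.elim 1 fun _ => 0
  left_inv := by decide
  right_inv := by decide

section Expansion

variable (R : Type*) [CommSemiring R]

noncomputable def expandInSecondVar : MvPowerSeries (Fin 2) R ≃ₐ[R] R⟦X⟧⟦X⟧ :=
  (MvPowerSeries.renameEquiv R finTwoEquivOptionUnit).trans (MvPowerSeries.optionEquivLeft Unit R)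

variable {R}

lemma coeff_coeff_expandInSecondVar (p : MvPowerSeries (Fin 2) R) (n k : ℕ) :
    coeff n (coeff k (expandInSecondVar R p)) =
      MvPowerSeries.coeff (Finsupp.single (0 : Fin 2) n + Finsupp.single 1 k) p := by
  have hexp : (Finsupp.single () n).optionElim k =
      (Finsupp.single (0 : Fin 2) n + Finsupp.single 1 k).embDomain
        finTwoEquivOptionUnit.toEmbedding := by
    ext (_ | _) <;> simp [finTwoEquivOptionUnit]
  rw [coeff_def (s := Finsupp.single () n) (by simp), expandInSecondVar, AlgEquiv.trans_apply,
    MvPowerSeries.coeff_coeff_optionEquivLeft, hexp]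
  exact MvPowerSeries.coeff_embDomain_rename _ _ _

@[simp]
lemma expandInSecondVar_X_zero : expandInSecondVar R (MvPowerSeries.X 0) = C X := by
  change MvPowerSeries.optionEquivLeft Unit R
    (MvPowerSeries.rename finTwoEquivOptionUnit (MvPowerSeries.X 0)) = C X
  rw [MvPowerSeries.rename_X]
  exact MvPowerSeries.optionEquivLeft_X_some ()

@[simp]
lemma expandInSecondVar_X_one : expandInSecondVar R (MvPowerSeries.X 1) = X := by
  change MvPowerSeries.optionEquivLeft Unit R
    (MvPowerSeries.rename finTwoEquivOptionUnit (MvPowerSeries.X 1)) = X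
  rw [MvPowerSeries.rename_X]
  exact MvPowerSeries.optionEquivLeft_X_none

end Expansion

lemma sliceT_eq_coeff_expandInSecondVar (j : ℕ) (v : MvPowerSeries (Fin 2) ℚ) :
    sliceT j v = coeff j (expandInSecondVar ℚ v) := by
  ext n
  rw [sliceT, coeff_mk, coeffQT, coeff_coeff_expandInSecondVar]

def SolvesVEquation {A : Type*} [CommRing A] (q : A) (V : A⟦X⟧) : Prop :=
  (1 - X) * V = C q * (1 - V) * (X - V)

namespace SolvesVEquation

section Coefficients

variable {A : Type*} [CommRing A] {q : A} {V : A⟦X⟧}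

lemma constantCoeff_mul (hV : SolvesVEquation q V) :
    constantCoeff V * (1 + q * (1 - constantCoeff V)) = 0 := by
  have h := congrArg (coeff 0) hV
  simp only [coeff_zero_eq_constantCoeff, map_sub, map_mul, map_one, constantCoeff_X,
    constantCoeff_C] at h
  linear_combination h

lemma coeff_one (hV : SolvesVEquation q V) :
    coeff 1 V - constantCoeff V =
      q * ((1 - constantCoeff V) * (1 - coeff 1 V) + constantCoeff V * coeff 1 V) := by
  have h := congrArg (coeff 1) hV
  simp only [sub_mul, one_mul, map_sub, coeff_mul, coeff_X, coeff_C,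
    Finset.Nat.sum_antidiagonal_succ, Finset.HasAntidiagonal.antidiagonal_zero,
    Finset.sum_singleton, coeff_zero_eq_constantCoeff] at h
  norm_num at h
  linear_combination h

lemma coeff_two (hV : SolvesVEquation q V) :
    coeff 2 V - coeff 1 V =
      q * ((2 * constantCoeff V - 1) * coeff 2 V - coeff 1 V * (1 - coeff 1 V)) := by
  have h := congrArg (coeff 2) hV
  simp only [sub_mul, one_mul, map_sub, coeff_mul, coeff_X, coeff_C,
    Finset.Nat.sum_antidiagonal_succ, Finset.HasAntidiagonal.antidiagonal_zero,
    Finset.sum_singleton, coeff_zero_eq_constantCoeff] at h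
  norm_num at h
  linear_combination h

end Coefficients

variable {R : Type*} [CommRing R] {V : R⟦X⟧⟦X⟧}

lemma constantCoeff_eq_zero (hV : SolvesVEquation X V) : constantCoeff V = 0 := by
  have hunit : IsUnit (1 + X * (1 - constantCoeff V)) :=
    isUnit_iff_constantCoeff.mpr (by simp)
  exact hunit.mul_left_eq_zero.mp hV.constantCoeff_mul

lemma one_add_X_mul_coeff_one (hV : SolvesVEquation X V) : (1 + X) * coeff 1 V = X := by
  have h := hV.coeff_one
  rw [hV.constantCoeff_eq_zero] at h
  linear_combination h

lemma one_add_X_pow_three_mul_coeff_two (hV : SolvesVEquation X V) :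
    (1 + X) ^ 3 * coeff 2 V = X := by
  have h1 := hV.one_add_X_mul_coeff_one
  have h2 := hV.coeff_two
  rw [hV.constantCoeff_eq_zero] at h2
  linear_combination (1 + X) ^ 2 * h2 + ((1 - X) * (1 + X) + X * ((1 + X) * coeff 1 V + X)) * h1

end SolvesVEquation

theorem stmt2_general (v : MvPowerSeries (Fin 2) ℚ)
    (hv : (1 - MvPowerSeries.X 1) * v =
        MvPowerSeries.X 0 * (1 - v) * (MvPowerSeries.X 1 - v)) :
    (1 + PowerSeries.X) * sliceT 1 v = PowerSeries.X ∧
    (1 + PowerSeries.X) ^ 3 * sliceT 2 v = PowerSeries.X := by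
  have hV : SolvesVEquation X (expandInSecondVar ℚ v) := by
    simpa [SolvesVEquation] using congrArg (expandInSecondVar ℚ) hv
  rw [sliceT_eq_coeff_expandInSecondVar, sliceT_eq_coeff_expandInSecondVar]
  exact ⟨hV.one_add_X_mul_coeff_one, hV.one_add_X_pow_three_mul_coeff_two⟩

/-- For the unique solution `v` (with zero constant term) of
`(1-t)·v = q·(1-v)·(t-v)`, the coefficients of `t¹` and `t²` satisfy
`(1+q)·V₁ = q` and `(1+q)³·V₂ = q`. -/
theorem stmt2 (v : MvPowerSeries (Fin 2) ℚ)
    (hv0 : MvPowerSeries.constantCoeff v = 0)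
    (hv : (1 - MvPowerSeries.X 1) * v =
        MvPowerSeries.X 0 * (1 - v) * (MvPowerSeries.X 1 - v)) :
    (1 + PowerSeries.X) * sliceT 1 v = PowerSeries.X ∧
    (1 + PowerSeries.X) ^ 3 * sliceT 2 v = PowerSeries.X :=
  stmt2_general v hv
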